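/- arXiv:2503.20140 — 6 statements merged into one kernel-verified Lean document; each statement's English description precedes it below -/
import Mathlib

section
/- Let H1 and H2 be Hilbert spaces and let T1 : H1 → H1 and T2 : H2 → H2 be bounded normal operators. If there exist linear isometries U1 : H1 → H2 and U2 : H2 → H1 such that U1 ∘ T1 = T2 ∘ U1 and U2 ∘ T2 = T1 ∘ U2, then T1 and T2 are unitarily equivalent, i.e., there exists a unitary U : H1 → H2 with U ∘ T1 = T2 ∘ U. -/
set_option maxHeartbeats 1000000

open ContinuousLinearMap NormedSpace Bornology
open scoped Nat InnerProductSpace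

namespace SchroederBernsteinNormalAux

variable {H1 H2 : Type*}
  [NormedAddCommGroup H1] [InnerProductSpace ℂ H1] [CompleteSpace H1]
  [NormedAddCommGroup H2] [InnerProductSpace ℂ H2] [CompleteSpace H2]

noncomputable instance normedAlgebraRatCLM {H : Type*} [NormedAddCommGroup H] [InnerProductSpace ℂ H] :
    NormedAlgebra ℚ (H →L[ℂ] H) :=
  NormedAlgebra.restrictScalars ℚ ℂ _

/-- Intertwining passes to powers. -/
lemma comp_pow (X : H1 →L[ℂ] H2) (T1 : H1 →L[ℂ] H1) (T2 : H2 →L[ℂ] H2)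
    (h : X.comp T1 = T2.comp X) (n : ℕ) : X.comp (T1 ^ n) = (T2 ^ n).comp X := by
  induction n with
  | zero => simp [pow_zero, one_def]
  | succ n ih =>
    rw [pow_succ, pow_succ]
    calc X.comp ((T1 ^ n) * T1) = (X.comp (T1 ^ n)).comp T1 := by
          ext x; simp [mul_apply]
      _ = ((T2 ^ n).comp X).comp T1 := by rw [ih]
      _ = (T2 ^ n).comp (X.comp T1) := by ext x; simp
      _ = (T2 ^ n).comp (T2.comp X) := by rw [h]
      _ = (T2 ^ n * T2).comp X := by ext x; simp [mul_apply]

/-- Intertwining passes to exponentials. -/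
lemma comp_exp (X : H1 →L[ℂ] H2) (T1 : H1 →L[ℂ] H1) (T2 : H2 →L[ℂ] H2)
    (h : X.comp T1 = T2.comp X) (w : ℂ) :
    X.comp (exp (w • T1)) = (exp (w • T2)).comp X := by
  have h' : X.comp (w • T1) = (w • T2).comp X := by
    ext x; simp only [comp_apply, smul_apply, map_smul]
    rw [← comp_apply X T1, h]; simp
  have hpow := comp_pow X (w • T1) (w • T2) h'
  rw [exp_eq_tsum ℂ, exp_eq_tsum ℂ]
  have e1 : X.comp (∑' n : ℕ, (n !⁻¹ : ℂ) • (w • T1) ^ n)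
      = ∑' n : ℕ, (n !⁻¹ : ℂ) • X.comp ((w • T1) ^ n) := by
    have := ((compL ℂ H1 H1 H2) X).map_tsum (expSeries_summable' (𝕂 := ℂ) (w • T1))
    simpa using this
  have e2 : (∑' n : ℕ, (n !⁻¹ : ℂ) • (w • T2) ^ n).comp X
      = ∑' n : ℕ, (n !⁻¹ : ℂ) • ((w • T2) ^ n).comp X := by
    have := (((compL ℂ H1 H2 H2).flip) X).map_tsum (expSeries_summable' (𝕂 := ℂ) (w • T2))
    simpa using this
  rw [e1, e2]
  exact tsum_congr fun n => by rw [hpow]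

lemma exp_neg_mul_exp {H : Type*} [NormedAddCommGroup H] [InnerProductSpace ℂ H] [CompleteSpace H]
    (A : H →L[ℂ] H) (w : ℂ) : exp ((-w) • A) * exp (w • A) = 1 := by
  rw [← exp_add_of_commute (by rw [neg_smul]; exact (Commute.refl (w • A)).neg_left)]
  simp [exp_zero]

/-- The exponential of a skew-adjoint operator has norm at most 1. -/
lemma norm_exp_skew_le_one {H : Type*} [NormedAddCommGroup H] [InnerProductSpace ℂ H]
    [CompleteSpace H] (A : H →L[ℂ] H) (hA : star A = -A) : ‖exp A‖ ≤ 1 := by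
  have h1 : star (exp A) * exp A = 1 := by
    rw [star_exp, hA, ← exp_add_of_commute (Commute.neg_left (Commute.refl A))]
    simp [exp_zero]
  have h2 : ‖star (exp A) * exp A‖ = ‖exp A‖ * ‖exp A‖ :=
    CStarRing.norm_star_mul_self
  rw [h1] at h2
  have h3 : ‖(1 : H →L[ℂ] H)‖ ≤ 1 := norm_id_le
  nlinarith [norm_nonneg (exp A)]

/-- The Fuglede–Putnam theorem: an operator intertwining two normal operators also
intertwines their adjoints. -/
theorem fuglede_putnam (X : H1 →L[ℂ] H2) (T1 : H1 →L[ℂ] H1) (T2 : H2 →L[ℂ] H2)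
    (hT1 : IsStarNormal T1) (hT2 : IsStarNormal T2)
    (h : X.comp T1 = T2.comp X) : X.comp (adjoint T1) = (adjoint T2).comp X := by
  set T1' := adjoint T1 with hT1'
  set T2' := adjoint T2 with hT2'
  have hs1 : star T1 = T1' := star_eq_adjoint T1
  have hs2 : star T2 = T2' := star_eq_adjoint T2
  have hc1 : Commute T1' T1 := by rw [← hs1]; exact hT1.star_comm_self
  have hc2 : Commute T2' T2 := by rw [← hs2]; exact hT2.star_comm_self
  have key : ∀ w : ℂ, (exp ((-w) • T2)).comp (X.comp (exp (w • T1))) = X := by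
    intro w
    rw [comp_exp X T1 T2 h w, ← comp_assoc, ← mul_def, exp_neg_mul_exp T2 w, one_def, id_comp]
  have hGdiff : Differentiable ℂ
      (fun s : ℂ => (exp (s • T2')).comp (X.comp (exp ((-s) • T1')))) := by
    have d2 : Differentiable ℂ (fun s : ℂ => exp (s • T2')) :=
      fun s => (hasDerivAt_exp_smul_const T2' s).differentiableAt
    have d1 : Differentiable ℂ (fun s : ℂ => exp ((-s) • T1')) := by
      have h' : Differentiable ℂ (fun t : ℂ => exp (t • T1')) :=
        fun t => (hasDerivAt_exp_smul_const T1' t).differentiableAt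
      exact h'.comp differentiable_neg
    exact d2.clm_comp ((differentiable_const X).clm_comp d1)
  have hGbdd : ∀ s : ℂ,
      ‖(exp (s • T2')).comp (X.comp (exp ((-s) • T1')))‖ ≤ ‖X‖ := by
    intro s
    have c2 : Commute (s • T2') ((-(starRingEnd ℂ s)) • T2) :=
      (hc2.smul_left s).smul_right _
    have c1 : Commute ((starRingEnd ℂ s) • T1) ((-s) • T1') :=
      (hc1.symm.smul_left _).smul_right _
    have expand : (exp (s • T2')).comp (X.comp (exp ((-s) • T1')))
        = (exp (s • T2' + (-(starRingEnd ℂ s)) • T2)).comp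
            (X.comp (exp ((starRingEnd ℂ s) • T1 + (-s) • T1'))) := by
      conv_lhs => rw [← key (starRingEnd ℂ s)]
      rw [exp_add_of_commute c2, exp_add_of_commute c1]
      simp only [mul_def, comp_assoc]
    have skew2 : star (s • T2' + (-(starRingEnd ℂ s)) • T2)
        = -(s • T2' + (-(starRingEnd ℂ s)) • T2) := by
      rw [star_add, star_smul, star_smul]
      simp only [hT2', star_eq_adjoint, adjoint_adjoint, star_neg, Complex.star_def,
        Complex.conj_conj]
      module
    have skew1 : star ((starRingEnd ℂ s) • T1 + (-s) • T1')
        = -((starRingEnd ℂ s) • T1 + (-s) • T1') := by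
      rw [star_add, star_smul, star_smul]
      simp only [hT1', star_eq_adjoint, adjoint_adjoint, star_neg, Complex.star_def,
        Complex.conj_conj]
      module
    rw [expand]
    calc ‖(exp (s • T2' + (-(starRingEnd ℂ s)) • T2)).comp
            (X.comp (exp ((starRingEnd ℂ s) • T1 + (-s) • T1')))‖
        ≤ ‖exp (s • T2' + (-(starRingEnd ℂ s)) • T2)‖ *
            (‖X‖ * ‖exp ((starRingEnd ℂ s) • T1 + (-s) • T1')‖) :=
          le_trans (opNorm_comp_le _ _) (by gcongr; exact opNorm_comp_le _ _)
      _ ≤ 1 * (‖X‖ * 1) := by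
          gcongr
          · exact norm_exp_skew_le_one _ skew2
          · exact norm_exp_skew_le_one _ skew1
      _ = ‖X‖ := by ring
  have hGconst : ∀ s : ℂ, (exp (s • T2')).comp (X.comp (exp ((-s) • T1'))) = X := by
    intro s
    have hb : IsBounded (Set.range
        (fun s : ℂ => (exp (s • T2')).comp (X.comp (exp ((-s) • T1'))))) := by
      rw [Metric.isBounded_iff_subset_closedBall 0]
      exact ⟨‖X‖, by rintro _ ⟨t, rfl⟩; simpa [mem_closedBall_iff_norm] using hGbdd t⟩
    have h' := hGdiff.apply_eq_apply_of_bounded hb s 0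
    simpa [exp_zero, one_def] using h'
  have hF : ∀ s : ℂ, (exp (s • T2')).comp X = X.comp (exp (s • T1')) := by
    intro s
    calc (exp (s • T2')).comp X
        = (exp (s • T2')).comp (X.comp (exp ((-s) • T1') * exp (s • T1'))) := by
          rw [exp_neg_mul_exp T1' s]; simp [one_def]
      _ = ((exp (s • T2')).comp (X.comp (exp ((-s) • T1')))).comp (exp (s • T1')) := by
          simp only [mul_def, comp_assoc]
      _ = X.comp (exp (s • T1')) := by rw [hGconst s]
  have hd2 : HasDerivAt (fun s : ℂ => (exp (s • T2')).comp X) (T2'.comp X) 0 := by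
    have h0 : HasDerivAt (fun s : ℂ => exp (s • T2')) T2' 0 := by
      simpa [exp_zero] using hasDerivAt_exp_smul_const T2' (0 : ℂ)
    exact ((compL ℂ H1 H2 H2).flip X).hasFDerivAt.comp_hasDerivAt 0 h0
  have hd1 : HasDerivAt (fun s : ℂ => (exp (s • T2')).comp X) (X.comp T1') 0 := by
    have h0 : HasDerivAt (fun s : ℂ => exp (s • T1')) T1' 0 := by
      simpa [exp_zero] using hasDerivAt_exp_smul_const T1' (0 : ℂ)
    have hd : HasDerivAt (fun s : ℂ => X.comp (exp (s • T1'))) (X.comp T1') 0 :=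
      ((compL ℂ H1 H1 H2) X).hasFDerivAt.comp_hasDerivAt 0 h0
    exact hd.congr_of_eventuallyEq (Filter.Eventually.of_forall fun s => hF s)
  exact (hd2.unique hd1).symm

lemma orthogonalProjection_eq_self_iff {E : Type*} [NormedAddCommGroup E]
    [InnerProductSpace ℂ E] {K : Submodule ℂ E} [K.HasOrthogonalProjection] {v : E} :
    (K.orthogonalProjectionOnto v : E) = v ↔ v ∈ K :=
  Submodule.starProjection_eq_self_iff

lemma orthogonalProjection_add_orthogonalProjection_orthogonal {E : Type*} [NormedAddCommGroup E]
    [InnerProductSpace ℂ E] (K : Submodule ℂ E) [K.HasOrthogonalProjection] (w : E) :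
    (K.orthogonalProjectionOnto w : E) + (Kᗮ.orthogonalProjectionOnto w : E) = w :=
  K.starProjection_add_starProjection_orthogonal w

/-- The sum of two orthogonal closed subspaces is closed. -/
lemma isClosed_sup_orthogonal {E : Type*} [NormedAddCommGroup E] [InnerProductSpace ℂ E]
    [CompleteSpace E] {K1 K2 : Submodule ℂ E} (h1 : IsClosed (K1 : Set E))
    (h2 : IsClosed (K2 : Set E)) (h12 : K2 ≤ K1ᗮ) :
    IsClosed ((K1 ⊔ K2 : Submodule ℂ E) : Set E) := by
  haveI : CompleteSpace K1 := h1.completeSpace_coe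
  haveI : CompleteSpace K2 := h2.completeSpace_coe
  have h21 : K1 ≤ K2ᗮ := le_trans K1.le_orthogonal_orthogonal (Submodule.orthogonal_le h12)
  set prj : E →L[ℂ] E :=
    K1.subtypeL.comp (Submodule.orthogonalProjectionOnto K1) + K2.subtypeL.comp (Submodule.orthogonalProjectionOnto K2)
    with hprj
  have hfix : ∀ y ∈ (K1 ⊔ K2 : Submodule ℂ E), prj y = y := by
    intro y hy
    obtain ⟨a, ha, b, hb, rfl⟩ := Submodule.mem_sup.mp hy
    have pa1 : (Submodule.orthogonalProjectionOnto K1 a : E) = a := orthogonalProjection_eq_self_iff.mpr ha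
    have pb1 : Submodule.orthogonalProjectionOnto K1 b = 0 :=
      Submodule.orthogonalProjectionOnto_apply_of_mem_orthogonal (h12 hb)
    have pa2 : Submodule.orthogonalProjectionOnto K2 a = 0 :=
      Submodule.orthogonalProjectionOnto_apply_of_mem_orthogonal (h21 ha)
    have pb2 : (Submodule.orthogonalProjectionOnto K2 b : E) = b := orthogonalProjection_eq_self_iff.mpr hb
    simp [hprj, map_add, pa1, pb1, pa2, pb2]
  apply isClosed_of_closure_subset
  intro x hx
  have heq : Set.EqOn prj id (closure ((K1 ⊔ K2 : Submodule ℂ E) : Set E)) :=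
    Set.EqOn.closure (fun y hy => hfix y hy) prj.continuous continuous_id
  have hx' : prj x = x := heq hx
  have : prj x ∈ (K1 ⊔ K2 : Submodule ℂ E) := by
    rw [hprj]
    exact Submodule.add_mem_sup (Submodule.coe_mem _) (Submodule.coe_mem _)
  rwa [hx'] at this

/-- The image of a closed subspace under a linear isometry is closed. -/
lemma isClosed_map_isometry {E F : Type*} [NormedAddCommGroup E] [InnerProductSpace ℂ E]
    [CompleteSpace E] [NormedAddCommGroup F] [InnerProductSpace ℂ F]
    (g : E →ₗᵢ[ℂ] F) {K : Submodule ℂ E} (hK : IsClosed (K : Set E)) :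
    IsClosed ((K.map g.toLinearMap : Submodule ℂ F) : Set F) := by
  have hcoe : ((K.map g.toLinearMap : Submodule ℂ F) : Set F) = g '' (K : Set E) := by
    ext x; simp [Submodule.mem_map]
  rw [hcoe]
  exact ((isComplete_image_iff g.isometry.isUniformInducing).mpr hK.isComplete).isClosed

end SchroederBernsteinNormalAux

open SchroederBernsteinNormalAux

/-- Schröder–Bernstein for normal operators: if `T1` and `T2` are bounded normal operators
on Hilbert spaces and there are linear isometries intertwining them in both directions,
then `T1` and `T2` are unitarily equivalent. -/
theorem schroeder_bernstein_normal_operators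
    {H1 H2 : Type*}
    [NormedAddCommGroup H1] [InnerProductSpace ℂ H1] [CompleteSpace H1]
    [NormedAddCommGroup H2] [InnerProductSpace ℂ H2] [CompleteSpace H2]
    (T1 : H1 →L[ℂ] H1) (T2 : H2 →L[ℂ] H2)
    (hT1 : IsStarNormal T1) (hT2 : IsStarNormal T2)
    (U1 : H1 →ₗᵢ[ℂ] H2) (U2 : H2 →ₗᵢ[ℂ] H1)
    (hU1 : ∀ x : H1, U1 (T1 x) = T2 (U1 x))
    (hU2 : ∀ x : H2, U2 (T2 x) = T1 (U2 x)) :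
    ∃ U : H1 ≃ₗᵢ[ℂ] H2, ∀ x : H1, U (T1 x) = T2 (U x) := by
  classical
  -- continuous-linear-map versions of the intertwining relations, and Fuglede–Putnam
  have hU1c : U1.toContinuousLinearMap.comp T1 = T2.comp U1.toContinuousLinearMap := by
    ext x; simpa using hU1 x
  have hU2c : U2.toContinuousLinearMap.comp T2 = T1.comp U2.toContinuousLinearMap := by
    ext x; simpa using hU2 x
  have hU1star : ∀ x : H1, U1 (adjoint T1 x) = adjoint T2 (U1 x) := by
    have h := fuglede_putnam _ T1 T2 hT1 hT2 hU1c
    intro x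
    have := congrArg (fun S => S x) h
    simpa using this
  have hU2star : ∀ x : H2, U2 (adjoint T2 x) = adjoint T1 (U2 x) := by
    have h := fuglede_putnam _ T2 T1 hT2 hT1 hU2c
    intro x
    have := congrArg (fun S => S x) h
    simpa using this
  -- the canonical isometry `g ∘ f : H1 → H1`
  set gf : H1 →ₗᵢ[ℂ] H1 := U2.comp U1 with hgf
  have hgfT1 : ∀ x : H1, T1 (gf x) = gf (T1 x) := by
    intro x
    show T1 (U2 (U1 x)) = U2 (U1 (T1 x))
    rw [← hU2 (U1 x), hU1 x]
  have hgfT1' : ∀ x : H1, adjoint T1 (gf x) = gf (adjoint T1 x) := by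
    intro x
    show adjoint T1 (U2 (U1 x)) = U2 (U1 (adjoint T1 x))
    rw [← hU2star (U1 x), hU1star x]
  -- the range of U2 and its orthogonal complement
  set R : Submodule ℂ H1 := LinearMap.range U2.toLinearMap with hR
  have hRclosed : IsClosed (R : Set H1) := by
    have hcoe : (R : Set H1) = Set.range U2 := by
      ext x; simp [hR]
    rw [hcoe]
    exact U2.isometry.isClosedEmbedding.isClosed_range
  haveI : CompleteSpace R := hRclosed.completeSpace_coe
  have hmemR : ∀ y : H2, U2 y ∈ R := fun y => ⟨y, rfl⟩
  -- invariance of R and Rᗮ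
  have hRperpT1 : ∀ x ∈ Rᗮ, T1 x ∈ Rᗮ := by
    intro x hx
    rw [Submodule.mem_orthogonal]
    rintro _ ⟨y, rfl⟩
    have : adjoint T1 (U2.toLinearMap y) = U2 (adjoint T2 y) := (hU2star y).symm
    calc ⟪U2.toLinearMap y, T1 x⟫_ℂ = ⟪adjoint T1 (U2.toLinearMap y), x⟫_ℂ := by
          rw [ContinuousLinearMap.adjoint_inner_left]
      _ = ⟪U2 (adjoint T2 y), x⟫_ℂ := by rw [this]
      _ = 0 := (Submodule.mem_orthogonal R x).mp hx _ (hmemR _)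
  have hRperpT1' : ∀ x ∈ Rᗮ, adjoint T1 x ∈ Rᗮ := by
    intro x hx
    rw [Submodule.mem_orthogonal]
    rintro _ ⟨y, rfl⟩
    have h' : T1 (U2.toLinearMap y) = U2 (T2 y) := (hU2 y).symm
    calc ⟪U2.toLinearMap y, adjoint T1 x⟫_ℂ = ⟪T1 (U2.toLinearMap y), x⟫_ℂ := by
          rw [ContinuousLinearMap.adjoint_inner_right]
      _ = ⟪U2 (T2 y), x⟫_ℂ := by rw [h']
      _ = 0 := (Submodule.mem_orthogonal R x).mp hx _ (hmemR _)
  -- the least fixed point of S ↦ Rᗮ ⊔ gf(S)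
  set F : Submodule ℂ H1 →o Submodule ℂ H1 :=
    ⟨fun S => Rᗮ ⊔ Submodule.map gf.toLinearMap S,
      fun S S' h => sup_le_sup_left (Submodule.map_mono h) _⟩ with hF
  set A' : Submodule ℂ H1 := F.lfp with hA'
  have hA'fix : Rᗮ ⊔ Submodule.map gf.toLinearMap A' = A' := F.map_lfp
  have hA0leA' : Rᗮ ≤ A' := le_sup_left.trans hA'fix.le
  have hmapleA' : Submodule.map gf.toLinearMap A' ≤ A' := le_sup_right.trans hA'fix.le
  -- its closure
  set A : Submodule ℂ H1 := A'.topologicalClosure with hA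
  have hA'leA : A' ≤ A := Submodule.le_topologicalClosure _
  have hAclosed : IsClosed (A : Set H1) := Submodule.isClosed_topologicalClosure _
  haveI : CompleteSpace A := hAclosed.completeSpace_coe
  have hmapA_le_R : Submodule.map gf.toLinearMap A ≤ R := by
    rintro _ ⟨y, _, rfl⟩; exact ⟨U1 y, rfl⟩
  have hmapA_le_A : Submodule.map gf.toLinearMap A ≤ A := by
    intro x hx
    obtain ⟨y, hy, rfl⟩ := hx
    have hy' : (y : H1) ∈ closure (A' : Set H1) := hy
    have h1 : gf y ∈ closure (gf '' (A' : Set H1)) :=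
      image_closure_subset_closure_image gf.continuous ⟨y, hy', rfl⟩
    have h2 : gf '' (A' : Set H1) ⊆ (A' : Set H1) := by
      rintro _ ⟨z, hz, rfl⟩; exact hmapleA' ⟨z, hz, rfl⟩
    exact closure_mono h2 h1
  -- the key fixed-point identity for A itself
  have hAeq : Rᗮ ⊔ Submodule.map gf.toLinearMap A = A := by
    apply le_antisymm
    · exact sup_le (hA0leA'.trans hA'leA) hmapA_le_A
    · have hclosed : IsClosed ((Rᗮ ⊔ Submodule.map gf.toLinearMap A : Submodule ℂ H1) : Set H1) :=
        isClosed_sup_orthogonal R.isClosed_orthogonal (isClosed_map_isometry gf hAclosed)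
          (hmapA_le_R.trans R.le_orthogonal_orthogonal)
      refine Submodule.topologicalClosure_minimal _ ?_ hclosed
      rw [← hA'fix]
      exact sup_le_sup_left (Submodule.map_mono hA'leA) _
  -- invariance of A under operators commuting with gf and preserving Rᗮ
  have hAinv : ∀ W : H1 →L[ℂ] H1, (∀ x, W (gf x) = gf (W x)) → (∀ x ∈ Rᗮ, W x ∈ Rᗮ) →
      ∀ x ∈ A, W x ∈ A := by
    intro W hWgf hWA0
    have hA'inv : ∀ x ∈ A', W x ∈ A' := by
      set S : Submodule ℂ H1 := A' ⊓ Submodule.comap (W : H1 →ₗ[ℂ] H1) A' with hS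
      have hFS : F S ≤ S := by
        apply le_inf
        · exact (F.mono inf_le_left).trans hA'fix.le
        · apply sup_le
          · intro x hx
            exact Submodule.mem_comap.mpr (hA0leA' (hWA0 x hx))
          · rintro _ ⟨y, hy, rfl⟩
            refine Submodule.mem_comap.mpr ?_
            show W (gf y) ∈ A'
            rw [hWgf]
            exact hmapleA' ⟨W y, (Submodule.mem_inf.mp hy).2, rfl⟩
      have hle : A' ≤ S := OrderHom.lfp_le F hFS
      intro x hx
      exact Submodule.mem_comap.mp (Submodule.mem_inf.mp (hle hx)).2
    intro x hx
    have hx' : x ∈ closure (A' : Set H1) := hx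
    have h1 : W x ∈ closure (W '' (A' : Set H1)) :=
      image_closure_subset_closure_image W.continuous ⟨x, hx', rfl⟩
    have h2 : W '' (A' : Set H1) ⊆ (A' : Set H1) := by
      rintro _ ⟨z, hz, rfl⟩; exact hA'inv z hz
    exact closure_mono h2 h1
  have hAT1 : ∀ x ∈ A, T1 x ∈ A := hAinv T1 hgfT1 hRperpT1
  have hAT1' : ∀ x ∈ A, adjoint T1 x ∈ A := hAinv (adjoint T1) hgfT1' hRperpT1'
  have hAperpT1 : ∀ x ∈ Aᗮ, T1 x ∈ Aᗮ := by
    intro x hx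
    rw [Submodule.mem_orthogonal]
    intro u hu
    calc ⟪u, T1 x⟫_ℂ = ⟪adjoint T1 u, x⟫_ℂ := by rw [ContinuousLinearMap.adjoint_inner_left]
      _ = 0 := (Submodule.mem_orthogonal A x).mp hx _ (hAT1' u hu)
  -- Aᗮ sits inside the range of U2
  have hperpR : Aᗮ ≤ R := by
    have h1 : Aᗮ ≤ Rᗮᗮ := Submodule.orthogonal_le (hA0leA'.trans hA'leA)
    rwa [Submodule.orthogonal_orthogonal R] at h1
  -- the inverse of U2 on Aᗮ, as a linear map on H1 (via the projection onto Aᗮ)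
  set e : H2 ≃ₗᵢ[ℂ] R := U2.equivRange with he
  have hUe : ∀ w : R, U2 (e.symm w) = (w : H1) := by
    intro w
    have h1 : (e (e.symm w) : H1) = (w : H1) := by rw [e.apply_symm_apply]
    rw [← h1]; rfl
  set ginv : H1 →ₗ[ℂ] H2 :=
    (e.symm.toLinearEquiv : R →ₗ[ℂ] H2) ∘ₗ ((Submodule.inclusion hperpR) ∘ₗ
      ((Submodule.orthogonalProjectionOnto Aᗮ : H1 →L[ℂ] Aᗮ) : H1 →ₗ[ℂ] Aᗮ)) with hginvdef
  have hginv : ∀ x : H1, U2 (ginv x) = ↑(Submodule.orthogonalProjectionOnto Aᗮ x) := by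
    intro x
    exact (hUe _).trans rfl
  -- the candidate unitary, as a linear map
  set Ulin : H1 →ₗ[ℂ] H2 :=
    (U1.toLinearMap ∘ₗ (A.subtype ∘ₗ ((Submodule.orthogonalProjectionOnto A : H1 →L[ℂ] A) : H1 →ₗ[ℂ] A)))
      + ginv with hUlin
  have hUapp : ∀ x : H1, Ulin x = U1 ↑(Submodule.orthogonalProjectionOnto A x) + ginv x := fun x => rfl
  -- orthogonality of the two pieces
  have horth : ∀ a ∈ A, ∀ b : H2, U2 b ∈ Aᗮ → ⟪U1 a, b⟫_ℂ = 0 := by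
    intro a ha b hb
    have h1 : ⟪U1 a, b⟫_ℂ = ⟪U2 (U1 a), U2 b⟫_ℂ := (U2.inner_map_map _ _).symm
    rw [h1]
    refine (Submodule.mem_orthogonal A (U2 b)).mp hb _ (hmapA_le_A ⟨a, ha, rfl⟩)
  -- Ulin is an isometry
  have hnorm : ∀ x : H1, ‖Ulin x‖ = ‖x‖ := by
    intro x
    have hab : ⟪U1 (↑(Submodule.orthogonalProjectionOnto A x) : H1), ginv x⟫_ℂ = 0 :=
      horth _ (Submodule.coe_mem _) _ (by rw [hginv]; exact Submodule.coe_mem _)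
    have h1 : ‖Ulin x‖ * ‖Ulin x‖
        = ‖U1 (↑(Submodule.orthogonalProjectionOnto A x) : H1)‖ * ‖U1 (↑(Submodule.orthogonalProjectionOnto A x) : H1)‖
          + ‖ginv x‖ * ‖ginv x‖ := by
      rw [hUapp]
      exact norm_add_sq_eq_norm_sq_add_norm_sq_of_inner_eq_zero _ _ hab
    have hU1a : ‖U1 (↑(Submodule.orthogonalProjectionOnto A x) : H1)‖ = ‖(↑(Submodule.orthogonalProjectionOnto A x) : H1)‖ :=
      U1.norm_map _
    have hb : ‖ginv x‖ = ‖(↑(Submodule.orthogonalProjectionOnto Aᗮ x) : H1)‖ := by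
      rw [← hginv x]; exact (U2.norm_map _).symm
    have hPQ : ⟪(↑(Submodule.orthogonalProjectionOnto A x) : H1), (↑(Submodule.orthogonalProjectionOnto Aᗮ x) : H1)⟫_ℂ = 0 :=
      (Submodule.mem_orthogonal A _).mp (Submodule.coe_mem _) _ (Submodule.coe_mem _)
    have h2 : ‖x‖ * ‖x‖
        = ‖(↑(Submodule.orthogonalProjectionOnto A x) : H1)‖ * ‖(↑(Submodule.orthogonalProjectionOnto A x) : H1)‖
          + ‖(↑(Submodule.orthogonalProjectionOnto Aᗮ x) : H1)‖ * ‖(↑(Submodule.orthogonalProjectionOnto Aᗮ x) : H1)‖ := by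
      conv_lhs => rw [← orthogonalProjection_add_orthogonalProjection_orthogonal A x]
      exact norm_add_sq_eq_norm_sq_add_norm_sq_of_inner_eq_zero _ _ hPQ
    have h3 : ‖Ulin x‖ * ‖Ulin x‖ = ‖x‖ * ‖x‖ := by rw [h1, h2, hU1a, hb]
    nlinarith [norm_nonneg (Ulin x), norm_nonneg x]
  set Uiso : H1 →ₗᵢ[ℂ] H2 := ⟨Ulin, hnorm⟩ with hUiso
  -- the action on A and on Aᗮ
  have hUa : ∀ a ∈ A, Ulin a = U1 a := by
    intro a ha
    have hg : ginv a = 0 := by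
      apply U2.injective
      rw [hginv, map_zero]
      rw [Submodule.orthogonalProjectionOnto_apply_of_mem_orthogonal
        (A.le_orthogonal_orthogonal ha)]
      rfl
    rw [hUapp, hg, add_zero, orthogonalProjection_eq_self_iff.mpr ha]
  have hUy : ∀ y ∈ Aᗮ, Ulin y = ginv y := by
    intro y hy
    have hp : Submodule.orthogonalProjectionOnto A y = 0 :=
      Submodule.orthogonalProjectionOnto_apply_of_mem_orthogonal hy
    rw [hUapp, hp]
    simp
  -- surjectivity
  set K : Submodule ℂ H2 := LinearMap.range Uiso.toLinearMap with hK
  have hKclosed : IsClosed (K : Set H2) := by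
    have hcoe : (K : Set H2) = Set.range Uiso := by
      ext x
      simp only [hK, SetLike.mem_coe, LinearMap.mem_range, Set.mem_range]
      exact Iff.rfl
    rw [hcoe]
    exact Uiso.isometry.isClosedEmbedding.isClosed_range
  haveI : CompleteSpace K := hKclosed.completeSpace_coe
  have hKtop : K = ⊤ := by
    rw [← Submodule.orthogonal_eq_bot_iff, Submodule.eq_bot_iff]
    intro z hz
    have hzK : ∀ u ∈ K, ⟪u, z⟫_ℂ = 0 := (Submodule.mem_orthogonal K z).mp hz
    have huA : U2 z ∈ A := by
      have h' : U2 z ∈ Aᗮᗮ := by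
        rw [Submodule.mem_orthogonal]
        intro y hy
        have hgy : ginv y ∈ K := ⟨y, hUy y hy⟩
        calc ⟪y, U2 z⟫_ℂ = ⟪U2 (ginv y), U2 z⟫_ℂ := by
              rw [hginv y, orthogonalProjection_eq_self_iff.mpr hy]
          _ = ⟪ginv y, z⟫_ℂ := U2.inner_map_map _ _
          _ = 0 := hzK _ hgy
      rwa [Submodule.orthogonal_orthogonal A] at h'
    rw [← hAeq] at huA
    obtain ⟨a0, ha0, w, hw, hsum⟩ := Submodule.mem_sup.mp huA
    obtain ⟨a, ha, rfl⟩ := hw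
    have h1 : ⟪a0, U2 z⟫_ℂ = 0 := (Submodule.mem_orthogonal' R a0).mp ha0 _ (hmemR z)
    have h2 : ⟪a0, gf.toLinearMap a⟫_ℂ = 0 :=
      (Submodule.mem_orthogonal' R a0).mp ha0 _ ⟨U1 a, rfl⟩
    have h3 : ⟪a0, a0⟫_ℂ = 0 := by
      have h4 := h1
      rw [← hsum, inner_add_right, h2, add_zero] at h4
      exact h4
    have ha00 : a0 = 0 := inner_self_eq_zero.mp h3
    have hz2 : U2 z = U2 (U1 a) := by
      rw [← hsum, ha00, zero_add]
      rfl
    have hz3 : z = U1 a := U2.injective hz2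
    have hzmem : z ∈ K := ⟨a, by rw [hz3, ← hUa a ha]⟩
    exact inner_self_eq_zero.mp (hzK z hzmem)
  have hsurj : Function.Surjective Uiso := by
    intro y
    have hy : y ∈ K := hKtop ▸ Submodule.mem_top
    obtain ⟨x, hx⟩ := hy
    exact ⟨x, hx⟩
  refine ⟨LinearIsometryEquiv.ofSurjective Uiso hsurj, ?_⟩
  -- commuting with the projections
  have hPT : ∀ x : H1, (↑(Submodule.orthogonalProjectionOnto A (T1 x)) : H1) = T1 ↑(Submodule.orthogonalProjectionOnto A x)
      ∧ (↑(Submodule.orthogonalProjectionOnto Aᗮ (T1 x)) : H1) = T1 ↑(Submodule.orthogonalProjectionOnto Aᗮ x) := by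
    intro x
    have hT : T1 x = T1 ↑(Submodule.orthogonalProjectionOnto A x) + T1 ↑(Submodule.orthogonalProjectionOnto Aᗮ x) := by
      rw [← map_add, orthogonalProjection_add_orthogonalProjection_orthogonal A x]
    have hmem1 : T1 (↑(Submodule.orthogonalProjectionOnto A x) : H1) ∈ A := hAT1 _ (Submodule.coe_mem _)
    have hmem2 : T1 (↑(Submodule.orthogonalProjectionOnto Aᗮ x) : H1) ∈ Aᗮ := hAperpT1 _ (Submodule.coe_mem _)
    constructor
    · rw [hT, map_add, Submodule.coe_add, orthogonalProjection_eq_self_iff.mpr hmem1,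
        Submodule.orthogonalProjectionOnto_apply_of_mem_orthogonal hmem2]
      simp
    · rw [hT, map_add, Submodule.coe_add, orthogonalProjection_eq_self_iff.mpr hmem2,
        Submodule.orthogonalProjectionOnto_apply_of_mem_orthogonal
          (A.le_orthogonal_orthogonal hmem1)]
      simp
  have hginvT : ∀ x : H1, ginv (T1 x) = T2 (ginv x) := by
    intro x
    apply U2.injective
    calc U2 (ginv (T1 x)) = ↑(Submodule.orthogonalProjectionOnto Aᗮ (T1 x)) := hginv _
      _ = T1 ↑(Submodule.orthogonalProjectionOnto Aᗮ x) := (hPT x).2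
      _ = T1 (U2 (ginv x)) := by rw [hginv x]
      _ = U2 (T2 (ginv x)) := (hU2 _).symm
  intro x
  rw [LinearIsometryEquiv.coe_ofSurjective]
  show Ulin (T1 x) = T2 (Ulin x)
  calc Ulin (T1 x) = U1 ↑(Submodule.orthogonalProjectionOnto A (T1 x)) + ginv (T1 x) := hUapp _
    _ = U1 (T1 ↑(Submodule.orthogonalProjectionOnto A x)) + T2 (ginv x) := by rw [(hPT x).1, hginvT x]
    _ = T2 (U1 ↑(Submodule.orthogonalProjectionOnto A x)) + T2 (ginv x) := by rw [hU1]
    _ = T2 (Ulin x) := by rw [hUapp, map_add]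
end

section
/- Let T be a bounded normal operator on a Hilbert space H, and let U1 : H → H be a linear isometry with U1 ∘ T = T ∘ U1. Then the range of U1 is a closed subspace of H that is invariant under both T and T*. -/
open ContinuousLinearMap

open NormedSpace in
/-- Fuglede's theorem in a C*-algebra: if `T` is normal and `S` commutes with `T`,
then `S` commutes with `star T`. -/
theorem fuglede_aux {A : Type*} [NormedRing A] [StarRing A] [CStarRing A]
    [NormedAlgebra ℂ A] [CompleteSpace A] [StarModule ℂ A] [ContinuousStar A]
    (T S : A) (hT : Commute T (star T)) (hST : S * T = T * S) :
    S * star T = star T * S := by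
  let +nondep : NormedAlgebra ℚ A := .restrictScalars ℚ ℂ A
  set N := star T with hN
  have hNT : Commute N T := hT.symm
  have hSw : ∀ w : ℂ, exp (w • T) * S = S * exp (w • T) := by
    intro w
    have h : Commute S T := hST
    exact ((h.smul_right w).exp_right).symm
  -- the entire function `f`
  set f : ℂ → A := fun z => exp (z • N) * S * exp (z • (-N)) with hf
  -- key identity rewriting `f z` with unitary factors
  have key : ∀ z : ℂ,
      f z = exp (z • N - (starRingEnd ℂ z) • T) * S *
          exp ((starRingEnd ℂ z) • T - z • N) := by
    intro z
    set w : ℂ := starRingEnd ℂ z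
    have hc1 : Commute (z • N) (-(w • T)) := ((hNT.smul_left z).smul_right w).neg_right
    have hc2 : Commute (w • T) (-(z • N)) := ((hNT.symm.smul_left w).smul_right z).neg_right
    have e1 : exp (z • N - w • T) = exp (z • N) * exp (-(w • T)) := by
      rw [sub_eq_add_neg, exp_add_of_commute hc1]
    have e2 : exp (w • T - z • N) = exp (w • T) * exp (-(z • N)) := by
      rw [sub_eq_add_neg, exp_add_of_commute hc2]
    have hS1 : exp (-(w • T)) * S = S * exp (-(w • T)) := by
      have := hSw (-w); rwa [neg_smul] at this
    have hcancel : exp (-(w • T)) * exp (w • T) = 1 := by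
      rw [← exp_add_of_commute ((Commute.refl (w • T)).neg_left), neg_add_cancel, exp_zero]
    simp only [hf]
    rw [e1, e2, smul_neg]
    rw [mul_assoc (exp (z • N)) (exp (-(w • T))) S, hS1]
    simp only [mul_assoc]
    rw [← mul_assoc (exp (-(w • T))) (exp (w • T)), hcancel, one_mul]

  -- boundedness
  have hbdd : Bornology.IsBounded (Set.range f) := by
    rw [isBounded_iff_forall_norm_le]
    refine ⟨‖S‖, ?_⟩
    rintro y ⟨z, rfl⟩
    set w : ℂ := starRingEnd ℂ z
    have hskew : (z • N - w • T) ∈ skewAdjoint A := by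
      rw [skewAdjoint.mem_iff]
      simp [star_smul, hN, neg_sub, w, Complex.conj_conj]
    have hskew2 : (w • T - z • N) ∈ skewAdjoint A := by
      rw [skewAdjoint.mem_iff]
      simp [star_smul, hN, neg_sub, w, Complex.conj_conj]
    have hu1 : exp (z • N - w • T) ∈ unitary A :=
      exp_mem_unitary_of_mem_skewAdjoint hskew
    have hu2 : exp (w • T - z • N) ∈ unitary A :=
      exp_mem_unitary_of_mem_skewAdjoint hskew2
    rw [key z,
      CStarRing.norm_mul_mem_unitary _ hu2, CStarRing.norm_mem_unitary_mul S hu1]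
  -- differentiability
  have hdiff : Differentiable ℂ f := by
    have d1 : Differentiable ℂ (fun z : ℂ => exp (z • N)) :=
      fun t => (hasDerivAt_exp_smul_const N t).differentiableAt
    have d2 : Differentiable ℂ (fun z : ℂ => exp (z • (-N))) :=
      fun t => (hasDerivAt_exp_smul_const (-N) t).differentiableAt
    exact (d1.mul (differentiable_const S)).mul d2
  -- Liouville: f is constant
  have hconst : ∀ z : ℂ, f z = S := by
    intro z
    have := hdiff.apply_eq_apply_of_bounded hbdd z 0
    rwa [show f 0 = S by simp [hf, exp_zero]] at this
  -- deduce exp(z•N) commutes with S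
  have hcomm : ∀ z : ℂ, exp (z • N) * S = S * exp (z • N) := by
    intro z
    have h := hconst z
    have hcancel : exp (z • (-N)) * exp (z • N) = 1 := by
      rw [smul_neg, ← exp_add_of_commute ((Commute.refl (z • N)).neg_left), neg_add_cancel,
        exp_zero]
    calc exp (z • N) * S
        = exp (z • N) * S * (exp (z • (-N)) * exp (z • N)) := by rw [hcancel, mul_one]
      _ = f z * exp (z • N) := by simp only [hf, mul_assoc]
      _ = S * exp (z • N) := by rw [h]
  -- differentiate at 0
  have g1 : HasDerivAt (fun z : ℂ => exp (z • N) * S)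
      ((N * exp ((0 : ℂ) • N)) * S) 0 :=
    (hasDerivAt_exp_smul_const' N 0).mul_const S
  have g2 : HasDerivAt (fun z : ℂ => S * exp (z • N))
      (S * (exp ((0 : ℂ) • N) * N)) 0 :=
    (hasDerivAt_exp_smul_const N 0).const_mul S
  rw [funext hcomm] at g1
  have := g1.unique g2
  simp only [zero_smul, exp_zero, mul_one, one_mul] at this
  exact this.symm

/-- If `T` is a bounded normal operator and `U1` is a linear isometry commuting with `T`,
then the range of `U1` is a closed subspace invariant under `T` and `T*`. -/
theorem range_of_commuting_isometry_closed_invariant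
    {H : Type*} [NormedAddCommGroup H] [InnerProductSpace ℂ H] [CompleteSpace H]
    (T : H →L[ℂ] H) (hT : IsStarNormal T)
    (U1 : H →ₗᵢ[ℂ] H) (hU1 : ∀ x : H, U1 (T x) = T (U1 x)) :
    IsClosed (Set.range U1) ∧
      (∀ y ∈ Set.range U1, T y ∈ Set.range U1) ∧
      (∀ y ∈ Set.range U1, ContinuousLinearMap.adjoint T y ∈ Set.range U1) := by
  set S : H →L[ℂ] H := U1.toContinuousLinearMap with hS
  have hSapp : ∀ x : H, S x = U1 x := fun x => rfl
  have hST : S * T = T * S := by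
    ext x
    simpa [mul_apply, hSapp] using hU1 x
  have hfug : S * star T = star T * S := fuglede_aux T S hT.star_comm_self.symm hST
  refine ⟨U1.isometry.isClosedEmbedding.isClosed_range, ?_, ?_⟩
  · rintro y ⟨x, rfl⟩
    exact ⟨T x, hU1 x⟩
  · rintro y ⟨x, rfl⟩
    refine ⟨ContinuousLinearMap.adjoint T x, ?_⟩
    have := congrFun (congrArg (fun (f : H →L[ℂ] H) => (f : H → H)) hfug) x
    simpa [mul_apply, hSapp, ContinuousLinearMap.star_eq_adjoint] using this
end

section
/- Let T1 : H1 → H1 and T2 : H2 → H2 be bounded normal operators on Hilbert spaces, and let S : H1 → H2 be a bounded operator with S ∘ T1 = T2 ∘ S. Then S ∘ T1* = T2* ∘ S. -/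
open ContinuousLinearMap NormedSpace

section aux

variable {H1 H2 : Type*}
    [NormedAddCommGroup H1] [InnerProductSpace ℂ H1] [CompleteSpace H1]
    [NormedAddCommGroup H2] [InnerProductSpace ℂ H2] [CompleteSpace H2]

omit [CompleteSpace H1] [CompleteSpace H2] in
/-- Intertwining passes to powers. -/
lemma fp_intertwine_pow (A : H1 →L[ℂ] H1) (B : H2 →L[ℂ] H2) (S : H1 →L[ℂ] H2)
    (h : S ∘L A = B ∘L S) : ∀ n : ℕ, S ∘L (A ^ n) = (B ^ n) ∘L S := by
  intro n
  induction n with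
  | zero => simp [pow_zero, ContinuousLinearMap.one_def]
  | succ n ih =>
    have h1 : (A : H1 →L[ℂ] H1) ^ (n + 1) = (A ^ n) ∘L A := by
      rw [pow_succ]; rfl
    rw [h1, ← ContinuousLinearMap.comp_assoc, ih, ContinuousLinearMap.comp_assoc, h,
      ← ContinuousLinearMap.comp_assoc]
    rw [show (B : H2 →L[ℂ] H2) ^ (n + 1) = (B ^ n) ∘L B by rw [pow_succ]; rfl]

/-- Intertwining passes to exponentials. -/
lemma fp_intertwine_exp (A : H1 →L[ℂ] H1) (B : H2 →L[ℂ] H2) (S : H1 →L[ℂ] H2)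
    (h : S ∘L A = B ∘L S) : S ∘L exp A = exp B ∘L S := by
  set L : (H1 →L[ℂ] H1) →L[ℂ] (H1 →L[ℂ] H2) := (ContinuousLinearMap.compL ℂ H1 H1 H2) S with hL
  set R : (H2 →L[ℂ] H2) →L[ℂ] (H1 →L[ℂ] H2) :=
    (ContinuousLinearMap.compL ℂ H1 H2 H2).flip S with hR
  have hLa : ∀ X : H1 →L[ℂ] H1, L X = S ∘L X := fun _ => rfl
  have hRa : ∀ Y : H2 →L[ℂ] H2, R Y = Y ∘L S := fun _ => rfl
  have h1 : S ∘L exp A = L (exp A) := rfl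
  have h2 : exp B ∘L S = R (exp B) := rfl
  rw [h1, h2, exp_eq_tsum ℂ, exp_eq_tsum ℂ]
  rw [L.map_tsum (expSeries_summable' (𝕂 := ℂ) A),
      R.map_tsum (expSeries_summable' (𝕂 := ℂ) B)]
  congr 1
  funext n
  rw [map_smul, map_smul, hLa, hRa, fp_intertwine_pow A B S h n]

/-- The exponential of a skew-adjoint operator has norm at most one. -/
lemma fp_norm_exp_skew_le_one {H : Type*} [NormedAddCommGroup H] [InnerProductSpace ℂ H]
    [CompleteSpace H] (X : H →L[ℂ] H) (hX : star X = -X) : ‖exp X‖ ≤ 1 := by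
  have h1 : star (exp X) * exp X = 1 := by
    letI : NormedAlgebra ℚ (H →L[ℂ] H) := .restrictScalars ℚ ℂ _
    rw [star_exp, hX, ← exp_add_of_commute (Commute.refl X).neg_left, neg_add_cancel, exp_zero]
  have h2 : ‖star (exp X) * exp X‖ = ‖exp X‖ * ‖exp X‖ :=
    CStarRing.norm_star_mul_self
  have h3 : ‖exp X‖ * ‖exp X‖ ≤ 1 := by
    rw [← h2, h1]
    simpa [ContinuousLinearMap.one_def] using ContinuousLinearMap.norm_id_le (E := H)
  nlinarith [norm_nonneg (exp X)]

end aux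

set_option maxHeartbeats 1000000 in
/-- The Fuglede–Putnam theorem: a bounded operator intertwining two bounded normal
operators also intertwines their adjoints. -/
theorem fuglede_putnam
    {H1 H2 : Type*}
    [NormedAddCommGroup H1] [InnerProductSpace ℂ H1] [CompleteSpace H1]
    [NormedAddCommGroup H2] [InnerProductSpace ℂ H2] [CompleteSpace H2]
    (T1 : H1 →L[ℂ] H1) (T2 : H2 →L[ℂ] H2)
    (hT1 : IsStarNormal T1) (hT2 : IsStarNormal T2)
    (S : H1 →L[ℂ] H2) (hS : S ∘L T1 = T2 ∘L S) :
    S ∘L ContinuousLinearMap.adjoint T1 = ContinuousLinearMap.adjoint T2 ∘L S := by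
  rw [← ContinuousLinearMap.star_eq_adjoint, ← ContinuousLinearMap.star_eq_adjoint]
  have hcA : Commute T1 (star T1) := (hT1.star_comm_self).symm
  have hcB : Commute T2 (star T2) := (hT2.star_comm_self).symm
  letI : NormedAlgebra ℚ (H1 →L[ℂ] H1) := .restrictScalars ℚ ℂ _
  letI : NormedAlgebra ℚ (H2 →L[ℂ] H2) := .restrictScalars ℚ ℂ _
  -- intertwining of scaled exponentials
  have hint : ∀ z : ℂ, S ∘L exp (z • T1) = exp (z • T2) ∘L S := by
    intro z
    apply fp_intertwine_exp
    rw [ContinuousLinearMap.comp_smul, hS, ContinuousLinearMap.smul_comp]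
  -- the entire function
  set g : ℂ → (H1 →L[ℂ] H2) :=
    fun z => exp (z • (-(star T2))) ∘L (S ∘L exp (z • (star T1))) with hg
  have hdiff : Differentiable ℂ g := by
    have h1 : Differentiable ℂ fun z : ℂ => exp (z • (-(star T2))) :=
      fun t => (hasDerivAt_exp_smul_const (𝕂 := ℂ) (-(star T2)) t).differentiableAt
    have h2 : Differentiable ℂ fun z : ℂ => exp (z • (star T1)) :=
      fun t => (hasDerivAt_exp_smul_const (𝕂 := ℂ) (star T1) t).differentiableAt
    exact h1.clm_comp ((differentiable_const S).clm_comp h2)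
  -- boundedness
  have hbdd : Bornology.IsBounded (Set.range g) := by
    rw [isBounded_iff_forall_norm_le]
    refine ⟨‖S‖, ?_⟩
    rintro _ ⟨z, rfl⟩
    have hS' : S = exp ((starRingEnd ℂ z) • T2) ∘L
        (S ∘L exp (-((starRingEnd ℂ z) • T1))) := by
      rw [← ContinuousLinearMap.comp_assoc, ← hint ((starRingEnd ℂ z)),
        ContinuousLinearMap.comp_assoc, ← ContinuousLinearMap.mul_def (exp _) (exp _),
        ← exp_add_of_commute (Commute.refl ((starRingEnd ℂ z) • T1)).neg_right,
        add_neg_cancel, exp_zero]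
      rfl
    have hc1 : Commute ((starRingEnd ℂ z) • T2) (z • (-(star T2))) := by
      rw [smul_neg]
      exact ((hcB.smul_left ((starRingEnd ℂ z))).smul_right z).neg_right
    have hc2 : Commute (-((starRingEnd ℂ z) • T1)) (z • (star T1)) :=
      ((hcA.smul_left ((starRingEnd ℂ z))).smul_right z).neg_left
    have key : g z = exp ((starRingEnd ℂ z) • T2 + z • (-(star T2))) ∘L
        (S ∘L exp (-((starRingEnd ℂ z) • T1) + z • (star T1))) := by
      rw [hg]
      conv_lhs => rw [hS']
      rw [exp_add_of_commute hc1, exp_add_of_commute hc2]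
      simp only [ContinuousLinearMap.mul_def]
      rw [ContinuousLinearMap.comp_assoc, ContinuousLinearMap.comp_assoc]
      have hcc : exp (z • (-(star T2))) ∘L exp ((starRingEnd ℂ z) • T2) =
          exp ((starRingEnd ℂ z) • T2) ∘L exp (z • (-(star T2))) := by
        rw [← ContinuousLinearMap.mul_def, ← ContinuousLinearMap.mul_def]
        exact ((hc1.exp).eq).symm
      rw [← ContinuousLinearMap.comp_assoc, hcc]
    rw [key]
    have hU : ‖exp ((starRingEnd ℂ z) • T2 + z • (-(star T2)))‖ ≤ 1 := by
      apply fp_norm_exp_skew_le_one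
      simp only [star_add, star_smul, star_neg, star_star, RCLike.star_def,
        starRingEnd_self_apply, smul_neg, neg_add_rev, neg_neg]
    have hV : ‖exp (-((starRingEnd ℂ z) • T1) + z • (star T1))‖ ≤ 1 := by
      apply fp_norm_exp_skew_le_one
      simp only [star_add, star_smul, star_neg, star_star, RCLike.star_def,
        starRingEnd_self_apply, smul_neg, neg_add_rev, neg_neg]
    calc ‖exp ((starRingEnd ℂ z) • T2 + z • (-(star T2))) ∘L
        (S ∘L exp (-((starRingEnd ℂ z) • T1) + z • (star T1)))‖
        ≤ ‖exp ((starRingEnd ℂ z) • T2 + z • (-(star T2)))‖ *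
          ‖S ∘L exp (-((starRingEnd ℂ z) • T1) + z • (star T1))‖ :=
          ContinuousLinearMap.opNorm_comp_le _ _
      _ ≤ 1 * (‖S‖ * 1) := by
          refine mul_le_mul hU ?_ (norm_nonneg _) zero_le_one
          calc ‖S ∘L exp (-((starRingEnd ℂ z) • T1) + z • (star T1))‖
              ≤ ‖S‖ * ‖exp (-((starRingEnd ℂ z) • T1) + z • (star T1))‖ :=
              ContinuousLinearMap.opNorm_comp_le _ _
            _ ≤ ‖S‖ * 1 := mul_le_mul_of_nonneg_left hV (norm_nonneg _)
      _ = ‖S‖ := by ring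
  -- Liouville: g is constant
  have hconst : ∀ z : ℂ, g z = g 0 := fun z => hdiff.apply_eq_apply_of_bounded hbdd z 0
  have hg0 : g 0 = S := by
    show exp ((0 : ℂ) • (-(star T2))) ∘L (S ∘L exp ((0 : ℂ) • (star T1))) = S
    rw [zero_smul, zero_smul, exp_zero, exp_zero]
    simp only [ContinuousLinearMap.one_def, ContinuousLinearMap.comp_id,
      ContinuousLinearMap.id_comp]
  -- hence S ∘L exp(z • T1*) = exp(z • T2*) ∘L S
  have hkey : ∀ z : ℂ, S ∘L exp (z • (star T1)) = exp (z • (star T2)) ∘L S := by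
    intro z
    have h : exp (z • (-(star T2))) ∘L (S ∘L exp (z • (star T1))) = S :=
      (hconst z).trans hg0
    calc S ∘L exp (z • (star T1))
        = (exp (z • (star T2)) ∘L exp (z • (-(star T2)))) ∘L
            (S ∘L exp (z • (star T1))) := by
          rw [← ContinuousLinearMap.mul_def (exp (z • (star T2))),
            ← exp_add_of_commute (by
              rw [smul_neg]
              exact (((Commute.refl (star T2)).smul_left z).smul_right z).neg_right)]
          rw [smul_neg, add_neg_cancel, exp_zero]
          rfl
      _ = exp (z • (star T2)) ∘L
            (exp (z • (-(star T2))) ∘L (S ∘L exp (z • (star T1)))) := by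
          rw [ContinuousLinearMap.comp_assoc]
      _ = exp (z • (star T2)) ∘L S := by rw [h]
  -- differentiate at 0
  set L : (H1 →L[ℂ] H1) →L[ℂ] (H1 →L[ℂ] H2) := (ContinuousLinearMap.compL ℂ H1 H1 H2) S with hL
  set R : (H2 →L[ℂ] H2) →L[ℂ] (H1 →L[ℂ] H2) :=
    (ContinuousLinearMap.compL ℂ H1 H2 H2).flip S with hR
  have hDL : HasDerivAt (fun z : ℂ => S ∘L exp (z • (star T1))) (S ∘L star T1) 0 := by
    have := L.hasFDerivAt.comp_hasDerivAt 0 (hasDerivAt_exp_smul_const' (𝕂 := ℂ) (star T1) 0)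
    simpa [hL, zero_smul, exp_zero, mul_one, Function.comp_def] using this
  have hDR : HasDerivAt (fun z : ℂ => exp (z • (star T2)) ∘L S) (star T2 ∘L S) 0 := by
    have := R.hasFDerivAt.comp_hasDerivAt 0 (hasDerivAt_exp_smul_const' (𝕂 := ℂ) (star T2) 0)
    simpa [hR, zero_smul, exp_zero, mul_one, Function.comp_def] using this
  have heq : (fun z : ℂ => S ∘L exp (z • (star T1))) =
      (fun z : ℂ => exp (z • (star T2)) ∘L S) := funext hkey
  rw [heq] at hDL
  exact hDL.unique hDR
end

section
/- Let T be a bounded normal operator on a separable Hilbert space H, and let W ⊆ V ⊆ H be closed subspaces each invariant under both T and T*. If T is unitarily equivalent to its restriction T|W (as an operator on W), then T is unitarily equivalent to its restriction T|V (as an operator on V). -/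
open ContinuousLinearMap

/-- Proposition 2.3: on a separable Hilbert space, if `W ⊆ V` are closed subspaces invariant
under a bounded normal operator `T` and its adjoint, and `T` is unitarily equivalent to its
restriction to `W`, then `T` is unitarily equivalent to its restriction to `V`. -/
theorem sandwiched_restriction_unitarily_equivalent_separable
    {H : Type*} [NormedAddCommGroup H] [InnerProductSpace ℂ H] [CompleteSpace H]
    [TopologicalSpace.SeparableSpace H]
    (T : H →L[ℂ] H) (hT : IsStarNormal T)
    (W V : Submodule ℂ H) (hWV : W ≤ V)
    (hWc : IsClosed (W : Set H)) (hVc : IsClosed (V : Set H))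
    (hTW : ∀ x ∈ W, T x ∈ W) (hTsW : ∀ x ∈ W, ContinuousLinearMap.adjoint T x ∈ W)
    (hTV : ∀ x ∈ V, T x ∈ V) (hTsV : ∀ x ∈ V, ContinuousLinearMap.adjoint T x ∈ V)
    (hW : ∃ U : H ≃ₗᵢ[ℂ] W, ∀ x : H, (U (T x) : H) = T (U x)) :
    ∃ U : H ≃ₗᵢ[ℂ] V, ∀ x : H, (U (T x) : H) = T (U x) := by
  classical
  obtain ⟨U, hU⟩ := hW
  haveI : CompleteSpace W := hWc.completeSpace_coe
  haveI : CompleteSpace V := hVc.completeSpace_coe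
  set Ts : H →L[ℂ] H := ContinuousLinearMap.adjoint T with hTsdef
  -- the embedding `u : H →ₗᵢ[ℂ] H` with range `W`
  set u : H →ₗᵢ[ℂ] H := W.subtypeₗᵢ.comp U.toLinearIsometry with hudef
  have hu : ∀ x : H, u x = (U x : H) := fun x => rfl
  have huW : ∀ x : H, u x ∈ W := fun x => (U x).2
  have huT : ∀ x : H, u (T x) = T (u x) := hU
  -- `u` also intertwines the adjoint
  have huTs : ∀ x : H, u (Ts x) = Ts (u x) := by
    intro x
    have hmem : u (Ts x) - Ts (u x) ∈ W :=
      W.sub_mem (huW _) (hTsW _ (huW x))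
    have key : ∀ w ∈ W, inner ℂ (w : H) (u (Ts x) - Ts (u x)) = (0 : ℂ) := by
      intro w hw
      obtain ⟨y, hy⟩ : ∃ y : H, (U y : H) = w := ⟨U.symm ⟨w, hw⟩, by simp⟩
      have h1 : (inner ℂ w (u (Ts x)) : ℂ) = inner ℂ (T y) x := by
        rw [← hy, hu]
        rw [show (inner ℂ ((U y : H)) ((U (Ts x) : H)) : ℂ) = inner ℂ (U y) (U (Ts x)) from
          (Submodule.coe_inner W _ _).symm]
        rw [LinearIsometryEquiv.inner_map_map]
        exact ContinuousLinearMap.adjoint_inner_right T y x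
      have h2 : (inner ℂ w (Ts (u x)) : ℂ) = inner ℂ (T y) x := by
        rw [ContinuousLinearMap.adjoint_inner_right, ← hy, ← hu, ← huT, hu, hu]
        rw [show (inner ℂ ((U (T y) : H)) ((U x : H)) : ℂ) = inner ℂ (U (T y)) (U x) from
          (Submodule.coe_inner W _ _).symm]
        rw [LinearIsometryEquiv.inner_map_map]
      rw [inner_sub_right, h1, h2, sub_self]
    have h0 := key _ hmem
    rw [inner_self_eq_zero, sub_eq_zero] at h0
    exact h0
  -- the orthogonal complement of `V` and its iterated images under `u`
  set Y : Submodule ℂ H := Vᗮ with hYdef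
  have hVY : Yᗮ = V := by
    rw [hYdef, Submodule.orthogonal_orthogonal_eq_closure, hVc.submodule_topologicalClosure_eq]
  have hTY : ∀ y ∈ Y, T y ∈ Y := by
    intro y hy
    rw [Submodule.mem_orthogonal] at hy ⊢
    intro v hv
    rw [← ContinuousLinearMap.adjoint_inner_left]
    exact hy _ (hTsV v hv)
  have hTsY : ∀ y ∈ Y, Ts y ∈ Y := by
    intro y hy
    rw [Submodule.mem_orthogonal] at hy ⊢
    intro v hv
    rw [ContinuousLinearMap.adjoint_inner_right]
    exact hy _ (hTV v hv)
  set A : ℕ → Submodule ℂ H := fun n => Nat.rec Y (fun _ S => S.map u.toLinearMap) n with hAdef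
  have hA0 : A 0 = Y := rfl
  have hASucc : ∀ n, A (n + 1) = (A n).map u.toLinearMap := fun n => rfl
  set S : Submodule ℂ H := ⨆ n, A n with hSdef
  set M : Submodule ℂ H := S.topologicalClosure with hMdef
  have hMc : IsClosed (M : Set H) := S.isClosed_topologicalClosure
  haveI : CompleteSpace M := hMc.completeSpace_coe
  have hYM : Y ≤ M := le_trans (le_iSup A 0) S.le_topologicalClosure
  -- invariance of each `A n` under `T` and `Ts`
  have hTA : ∀ n, ∀ x ∈ A n, T x ∈ A n := by
    intro n
    induction n with
    | zero => exact hTY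
    | succ n ih =>
      rintro x hx
      rw [hASucc] at hx ⊢
      obtain ⟨y, hy, rfl⟩ := hx
      exact ⟨T y, ih y hy, by simpa using huT y⟩
  have hTsA : ∀ n, ∀ x ∈ A n, Ts x ∈ A n := by
    intro n
    induction n with
    | zero => exact hTsY
    | succ n ih =>
      rintro x hx
      rw [hASucc] at hx ⊢
      obtain ⟨y, hy, rfl⟩ := hx
      exact ⟨Ts y, ih y hy, by simpa using huTs y⟩
  -- invariance of `S` and `M`
  have hSmap : ∀ (f : H →ₗ[ℂ] H), (∀ n, ∀ x ∈ A n, f x ∈ A n) → ∀ x ∈ S, f x ∈ S := by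
    intro f hf x hx
    have : S.map f ≤ S := by
      rw [hSdef, Submodule.map_iSup]
      exact iSup_le fun n =>
        le_trans (Submodule.map_le_iff_le_comap.2 fun z hz => hf n z hz) (le_iSup A n)
    exact this ⟨x, hx, rfl⟩
  have hclos : ∀ (f : H →L[ℂ] H), (∀ x ∈ S, f x ∈ S) → ∀ x ∈ M, f x ∈ M := by
    intro f hf x hx
    have hx' : x ∈ closure (S : Set H) := by
      rwa [← S.topologicalClosure_coe]
    have : f x ∈ closure (S : Set H) :=
      map_mem_closure f.continuous hx' fun z hz => hf z hz
    rwa [← S.topologicalClosure_coe] at this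
  have hTM : ∀ x ∈ M, T x ∈ M := hclos T (hSmap T.toLinearMap hTA)
  have hTsM : ∀ x ∈ M, Ts x ∈ M := hclos Ts (hSmap Ts.toLinearMap hTsA)
  have huS : ∀ x ∈ S, u x ∈ S := by
    intro x hx
    have : S.map u.toLinearMap ≤ S := by
      rw [hSdef, Submodule.map_iSup]
      exact iSup_le fun n => le_trans (le_of_eq (hASucc n).symm) (le_iSup A (n + 1))
    exact this ⟨x, hx, rfl⟩
  have huM : ∀ x ∈ M, u x ∈ M := by
    intro x hx
    have hx' : x ∈ closure (S : Set H) := by rwa [← S.topologicalClosure_coe]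
    have : u x ∈ closure (S : Set H) :=
      map_mem_closure u.continuous hx' fun z hz => huS z hz
    rwa [← S.topologicalClosure_coe] at this
  -- `T` preserves `Mᗮ`
  have hTMo : ∀ x ∈ Mᗮ, T x ∈ Mᗮ := by
    intro x hx
    rw [Submodule.mem_orthogonal] at hx ⊢
    intro m hm
    rw [← ContinuousLinearMap.adjoint_inner_left]
    exact hx _ (hTsM m hm)
  -- `Mᗮ ≤ V`
  have hMoV : Mᗮ ≤ V := by
    rw [← hVY]
    exact Submodule.orthogonal_le hYM
  -- `N = u(M)`, a closed subspace of `M`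
  set N : Submodule ℂ H := M.map u.toLinearMap with hNdef
  have hNc : IsClosed (N : Set H) := by
    have : IsComplete ((M : Set H).image u) := by
      rw [LinearIsometry.isComplete_image_iff]
      exact hMc.isComplete
    exact this.isClosed
  haveI : CompleteSpace N := hNc.completeSpace_coe
  have hNM : N ≤ M := Submodule.map_le_iff_le_comap.2 fun x hx => huM x hx
  have hAN : ∀ k, A (k + 1) ≤ N := by
    intro k
    rw [hASucc, hNdef]
    exact Submodule.map_mono (le_trans (le_iSup A k) S.le_topologicalClosure)
  -- `Sᗮ = Mᗮ`
  have hSMo : Sᗮ = Mᗮ := by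
    rw [hMdef, ← Submodule.orthogonal_orthogonal_eq_closure,
      Submodule.triorthogonal_eq_orthogonal]
  -- the projection onto `M`
  set p : H → H := fun x => (M.orthogonalProjectionOnto x : H) with hpdef
  have hpM : ∀ x, p x ∈ M := fun x => (M.orthogonalProjectionOnto x).2
  have hpo : ∀ x, x - p x ∈ Mᗮ := fun x => Submodule.sub_starProjection_mem_orthogonal x
  have hp_self : ∀ x ∈ M, p x = x := fun x hx => Submodule.starProjection_eq_self_iff.2 hx
  have hp_zero : ∀ x ∈ Mᗮ, p x = 0 := by
    intro x hx
    rw [hpdef]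
    simp only
    rw [Submodule.orthogonalProjectionOnto_apply_of_mem_orthogonal hx]
    rfl
  have hp_add : ∀ x y, p (x + y) = p x + p y := by
    intro x y; simp [hpdef]
  have hp_smul : ∀ (c : ℂ) x, p (c • x) = c • p x := by
    intro c x; simp [hpdef]
  -- the candidate isometry into `V`
  have hmemV : ∀ x : H, u (p x) + (x - p x) ∈ V := fun x =>
    V.add_mem (hWV (huW _)) (hMoV (hpo x))
  have hnorm : ∀ x : H, ‖u (p x) + (x - p x)‖ = ‖x‖ := by
    intro x
    have h1 : (inner ℂ (u (p x)) (x - p x) : ℂ) = 0 :=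
      (Submodule.mem_orthogonal M (x - p x)).1 (hpo x) _ (huM _ (hpM x))
    have h2 : (inner ℂ (p x) (x - p x) : ℂ) = 0 :=
      (Submodule.mem_orthogonal M (x - p x)).1 (hpo x) _ (hpM x)
    have e1 := norm_add_sq_eq_norm_sq_add_norm_sq_of_inner_eq_zero _ _ h1
    have e2 := norm_add_sq_eq_norm_sq_add_norm_sq_of_inner_eq_zero _ _ h2
    rw [add_sub_cancel] at e2
    rw [u.norm_map] at e1
    have : ‖u (p x) + (x - p x)‖ ^ 2 = ‖x‖ ^ 2 := by rw [pow_two, pow_two, e1, e2]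
    calc ‖u (p x) + (x - p x)‖ = Real.sqrt (‖u (p x) + (x - p x)‖ ^ 2) :=
          (Real.sqrt_sq (norm_nonneg _)).symm
      _ = Real.sqrt (‖x‖ ^ 2) := by rw [this]
      _ = ‖x‖ := Real.sqrt_sq (norm_nonneg _)
  set Φ : H →ₗᵢ[ℂ] V :=
    { toFun := fun x => ⟨u (p x) + (x - p x), hmemV x⟩
      map_add' := by
        intro x y
        apply Subtype.ext
        simp only [Submodule.coe_add]
        rw [hp_add]
        rw [u.map_add]
        abel
      map_smul' := by
        intro c x
        apply Subtype.ext
        simp only [Submodule.coe_smul, RingHom.id_apply]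
        rw [hp_smul, u.map_smul]
        simp [smul_add, smul_sub]
      norm_map' := fun x => hnorm x } with hΦdef
  have hΦapp : ∀ x : H, (Φ x : H) = u (p x) + (x - p x) := fun x => rfl
  -- surjectivity of `Φ`
  have hsurj : Function.Surjective Φ := by
    rintro ⟨v, hv⟩
    -- decompose v = m + q with m ∈ M, q ∈ Mᗮ
    set m : H := p v with hmdef
    set q : H := v - p v with hqdef
    have hmM : m ∈ M := hpM v
    have hqo : q ∈ Mᗮ := hpo v
    have hmV : m ∈ V := by
      have h := V.sub_mem hv (hMoV hqo)
      rwa [hqdef, sub_sub_cancel] at h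
    -- show m ∈ N
    have hmN : m ∈ N := by
      set n : H := (N.orthogonalProjectionOnto m : H) with hndef
      have hnN : n ∈ N := (N.orthogonalProjectionOnto m).2
      set r : H := m - n with hrdef
      have hrNo : r ∈ Nᗮ := Submodule.sub_starProjection_mem_orthogonal m
      have hrM : r ∈ M := M.sub_mem hmM (hNM hnN)
      have hnW : n ∈ W := by
        obtain ⟨z, _, hz⟩ := hnN
        rw [← hz]
        exact huW z
      have hrV : r ∈ V := V.sub_mem hmV (hWV hnW)
      have hrYo : r ∈ Yᗮ := by rw [hVY]; exact hrV
      have hrA : ∀ k, r ∈ (A k)ᗮ := by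
        intro k
        cases k with
        | zero => exact hrYo
        | succ k => exact Submodule.orthogonal_le (hAN k) hrNo
      have hrS : r ∈ Sᗮ := by
        rw [hSdef, ← Submodule.iInf_orthogonal]
        exact Submodule.mem_iInf _ |>.2 hrA
      have hrMo : r ∈ Mᗮ := hSMo ▸ hrS
      have hr0 : r = 0 := by
        have := (Submodule.mem_orthogonal M r).1 hrMo r hrM
        rwa [inner_self_eq_zero] at this
      have : m = n := by rw [← sub_eq_zero]; exact hr0
      rw [this]; exact hnN
    obtain ⟨m', hm'M, hm'⟩ := hmN
    refine ⟨m' + q, ?_⟩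
    apply Subtype.ext
    rw [hΦapp]
    have hpx : p (m' + q) = m' := by
      rw [hp_add, hp_self m' hm'M, hp_zero q hqo, add_zero]
    rw [hpx]
    show u m' + (m' + q - m') = v
    rw [add_sub_cancel_left]
    have h1 : u m' = m := hm'
    rw [h1, hmdef, hqdef]
    abel
  -- `Φ` intertwines `T`
  have hcomm : ∀ x : H, (Φ (T x) : H) = T (Φ x : H) := by
    intro x
    have hpT : p (T x) = T (p x) := by
      have h1 : T (p x) ∈ M := hTM _ (hpM x)
      have h2 : T x - T (p x) ∈ Mᗮ := by
        have : T x - T (p x) = T (x - p x) := by rw [map_sub]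
        rw [this]
        exact hTMo _ (hpo x)
      exact Submodule.eq_starProjection_of_mem_orthogonal h1 h2
    rw [hΦapp, hΦapp, hpT, huT, map_add, map_sub]
  -- conclude
  refine ⟨LinearIsometryEquiv.ofSurjective Φ hsurj, ?_⟩
  intro x
  have : ∀ y : H, ((LinearIsometryEquiv.ofSurjective Φ hsurj) y : H) = (Φ y : H) := fun y => rfl
  rw [this, this, hcomm]
end

section
/- Let T be a bounded normal operator on an arbitrary (not necessarily separable) Hilbert space H, and let W ⊆ V ⊆ H be closed subspaces each invariant under both T and T*. If T is unitarily equivalent to T|W, then T is unitarily equivalent to T|V. -/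
open ContinuousLinearMap

open scoped InnerProductSpace in
/-- Proposition 2.6: on an arbitrary Hilbert space, if `W ⊆ V` are closed subspaces invariant
under a bounded normal operator `T` and its adjoint, and `T` is unitarily equivalent to its
restriction to `W`, then `T` is unitarily equivalent to its restriction to `V`. -/
theorem sandwiched_restriction_unitarily_equivalent
    {H : Type*} [NormedAddCommGroup H] [InnerProductSpace ℂ H] [CompleteSpace H]
    (T : H →L[ℂ] H) (hT : IsStarNormal T)
    (W V : Submodule ℂ H) (hWV : W ≤ V)
    (hWc : IsClosed (W : Set H)) (hVc : IsClosed (V : Set H))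
    (hTW : ∀ x ∈ W, T x ∈ W) (hTsW : ∀ x ∈ W, ContinuousLinearMap.adjoint T x ∈ W)
    (hTV : ∀ x ∈ V, T x ∈ V) (hTsV : ∀ x ∈ V, ContinuousLinearMap.adjoint T x ∈ V)
    (hW : ∃ U : H ≃ₗᵢ[ℂ] W, ∀ x : H, (U (T x) : H) = T (U x)) :
    ∃ U : H ≃ₗᵢ[ℂ] V, ∀ x : H, (U (T x) : H) = T (U x) := by
  classical
  obtain ⟨U, hU⟩ := hW
  haveI : CompleteSpace V := hVc.completeSpace_coe
  haveI : CompleteSpace W := hWc.completeSpace_coe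
  -- the unitary `U` viewed as a linear isometry of `H` into itself with range `W`
  set u : H →ₗᵢ[ℂ] H := W.subtypeₗᵢ.comp U.toLinearIsometry with hu_def
  have huW : ∀ x, u x ∈ W := fun x => (U x).2
  have huT : ∀ x, u (T x) = T (u x) := hU
  have husurj : ∀ w ∈ W, ∃ x, u x = w := fun w hw => ⟨U.symm ⟨w, hw⟩, by
    show ((U (U.symm ⟨w, hw⟩)) : H) = w
    rw [U.apply_symm_apply]⟩
  -- `u` also intertwines the adjoint of `T`
  have huTs : ∀ x, u (adjoint T x) = adjoint T (u x) := by
    intro x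
    obtain ⟨z, hz⟩ := husurj _ (hTsW _ (huW x))
    have hz' : z = adjoint T x := by
      refine ext_inner_left ℂ (fun y => ?_)
      calc ⟪y, z⟫_ℂ = ⟪u y, u z⟫_ℂ := (u.inner_map_map y z).symm
        _ = ⟪T (u y), u x⟫_ℂ := by rw [hz, adjoint_inner_right]
        _ = ⟪u (T y), u x⟫_ℂ := by rw [huT]
        _ = ⟪T y, x⟫_ℂ := u.inner_map_map _ _
        _ = ⟪y, adjoint T x⟫_ℂ := (adjoint_inner_right T y x).symm
    rw [← hz', hz]
  -- `A` is the orthogonal complement of `V`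
  set A : Submodule ℂ H := Vᗮ with hA_def
  have hAperp : Aᗮ = V := Submodule.orthogonal_orthogonal V
  have hTA : ∀ x ∈ A, T x ∈ A := by
    intro x hx
    rw [Submodule.mem_orthogonal] at hx ⊢
    intro v hv
    rw [← adjoint_inner_left]
    exact hx _ (hTsV v hv)
  have hTsA : ∀ x ∈ A, adjoint T x ∈ A := by
    intro x hx
    rw [Submodule.mem_orthogonal] at hx ⊢
    intro v hv
    rw [adjoint_inner_right]
    exact hx _ (hTV v hv)
  -- the iterated images `uⁿ(A)` and their closed span `K`
  set f : ℕ → Submodule ℂ H := fun n => Nat.rec A (fun _ p => p.map u.toLinearMap) n with hf_def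
  have hfs : ∀ n, f (n + 1) = (f n).map u.toLinearMap := fun n => rfl
  set Ks : Submodule ℂ H := ⨆ n, f n with hKs_def
  set K : Submodule ℂ H := Ks.topologicalClosure with hK_def
  have hKclosed : IsClosed (K : Set H) := Submodule.isClosed_topologicalClosure _
  haveI : CompleteSpace K := hKclosed.completeSpace_coe
  have hKsK : Ks ≤ K := Submodule.le_topologicalClosure _
  have hAK : A ≤ K := le_trans (le_iSup f 0) hKsK
  -- membership in `K` via closure
  have hKmem : ∀ (g : H → H), Continuous g → (∀ y ∈ Ks, g y ∈ Ks) →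
      ∀ x ∈ K, g x ∈ K := by
    intro g hg hgKs x hx
    have h1 : (Ks : Set H) ⊆ g ⁻¹' (K : Set H) := fun y hy => hKsK (hgKs y hy)
    have h2 : closure (Ks : Set H) ⊆ g ⁻¹' (K : Set H) :=
      closure_minimal h1 (hKclosed.preimage hg)
    have hx' : x ∈ closure (Ks : Set H) := by
      rw [← Submodule.topologicalClosure_coe]; exact hx
    exact h2 hx'
  -- invariance of the `f n` and `Ks` under `T`, `T*`, `u`
  have hfT : ∀ n, ∀ x ∈ f n, T x ∈ f n := by
    intro n
    induction n with
    | zero => exact hTA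
    | succ n ih =>
      rintro x ⟨y, hy, rfl⟩
      exact ⟨T y, ih y hy, huT y⟩
  have hfTs : ∀ n, ∀ x ∈ f n, adjoint T x ∈ f n := by
    intro n
    induction n with
    | zero => exact hTsA
    | succ n ih =>
      rintro x ⟨y, hy, rfl⟩
      exact ⟨adjoint T y, ih y hy, huTs y⟩
  have hKsClosed : ∀ (g : H →L[ℂ] H), (∀ n, ∀ x ∈ f n, g x ∈ f n) →
      ∀ x ∈ Ks, g x ∈ Ks := by
    intro g hgf x hx
    refine Submodule.iSup_induction (motive := fun y => g y ∈ Ks) f hx ?_ (by simp) ?_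
    · intro n y hy
      exact le_trans (le_iSup f n) le_rfl (hgf n y hy)
    · intro y z hy hz
      rw [map_add]; exact Ks.add_mem hy hz
  have hKT : ∀ x ∈ K, T x ∈ K :=
    hKmem T T.continuous (hKsClosed T (fun n => hfT n))
  have hKTs : ∀ x ∈ K, adjoint T x ∈ K :=
    hKmem (adjoint T) (adjoint T).continuous (hKsClosed (adjoint T) (fun n => hfTs n))
  have hKsu : ∀ x ∈ Ks, u x ∈ Ks := by
    intro x hx
    refine Submodule.iSup_induction (motive := fun y => u y ∈ Ks) f hx ?_ (by simp) ?_
    · intro n y hy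
      have : u y ∈ f (n + 1) := by rw [hfs]; exact ⟨y, hy, rfl⟩
      exact le_iSup f (n + 1) this
    · intro y z hy hz
      rw [map_add]; exact Ks.add_mem hy hz
  have hKu : ∀ x ∈ K, u x ∈ K := hKmem u u.continuous hKsu
  -- `Kᗮ` is invariant under `T` and contained in `V`
  have hKpT : ∀ x ∈ Kᗮ, T x ∈ Kᗮ := by
    intro x hx
    rw [Submodule.mem_orthogonal] at hx ⊢
    intro k hk
    rw [← adjoint_inner_left]
    exact hx _ (hKTs k hk)
  have hKpV : Kᗮ ≤ V := by
    rw [← hAperp]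
    exact Submodule.orthogonal_le hAK
  -- the orthogonal projection onto `K`
  set p : H → H := fun x => ((K.orthogonalProjectionOnto x : K) : H) with hp_def
  have hpK : ∀ x, p x ∈ K := fun x => (K.orthogonalProjectionOnto x).2
  have hpperp : ∀ x, x - p x ∈ Kᗮ := fun x => Submodule.sub_starProjection_mem_orthogonal (K := K) x
  have hpT : ∀ x, p (T x) = T (p x) := by
    intro x
    refine Submodule.eq_starProjection_of_mem_orthogonal (K := K) (hKT _ (hpK x)) ?_
    have : T x - T (p x) = T (x - p x) := by rw [map_sub]
    rw [this]
    exact hKpT _ (hpperp x)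
  -- the candidate map `φ x = u (p x) + (x - p x)`
  set Pl : H →ₗ[ℂ] H := K.subtype.comp (K.orthogonalProjectionOnto : H →L[ℂ] K).toLinearMap
    with hPl_def
  have hPl : ∀ x, Pl x = p x := fun x => rfl
  set φ : H →ₗ[ℂ] H := u.toLinearMap.comp Pl + (LinearMap.id - Pl) with hφ_def
  have hφ : ∀ x, φ x = u (p x) + (x - p x) := fun x => rfl
  have hφV : ∀ x, φ x ∈ V := by
    intro x
    rw [hφ]
    exact V.add_mem (hWV (huW _)) (hKpV (hpperp x))
  -- `φ` is isometric
  have hφnorm : ∀ x, ‖φ x‖ = ‖x‖ := by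
    intro x
    have h1 : ⟪u (p x), x - p x⟫_ℂ = 0 :=
      (Submodule.mem_orthogonal K _).1 (hpperp x) _ (hKu _ (hpK x))
    have h2 : ⟪p x, x - p x⟫_ℂ = 0 :=
      (Submodule.mem_orthogonal K _).1 (hpperp x) _ (hpK x)
    have e1 : ‖φ x‖ * ‖φ x‖ = ‖u (p x)‖ * ‖u (p x)‖ + ‖x - p x‖ * ‖x - p x‖ := by
      rw [hφ]
      exact norm_add_sq_eq_norm_sq_add_norm_sq_of_inner_eq_zero _ _ h1
    have e2 : ‖x‖ * ‖x‖ = ‖p x‖ * ‖p x‖ + ‖x - p x‖ * ‖x - p x‖ := by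
      have e2' := norm_add_sq_eq_norm_sq_add_norm_sq_of_inner_eq_zero (p x) (x - p x) h2
      rwa [show p x + (x - p x) = x by abel] at e2'
    have e3 : ‖u (p x)‖ = ‖p x‖ := u.norm_map _
    have e4 : ‖φ x‖ * ‖φ x‖ = ‖x‖ * ‖x‖ := by rw [e1, e2, e3]
    nlinarith [norm_nonneg (φ x), norm_nonneg x]
  -- the image of `K` under `u` is a closed subspace
  set K' : Submodule ℂ H := K.map u.toLinearMap with hK'_def
  have hK'complete : IsComplete (K' : Set H) := by
    rw [hK'_def]
    rw [LinearIsometry.isComplete_map_iff]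
    exact completeSpace_coe_iff_isComplete.1 ‹CompleteSpace K›
  haveI : CompleteSpace K' := hK'complete.completeSpace_coe
  have hK'K : K' ≤ K := by
    rintro x ⟨y, hy, rfl⟩
    exact hKu y hy
  have hK'W : K' ≤ W := by
    rintro x ⟨y, hy, rfl⟩
    exact huW y
  -- key: every element of `K ∩ V` lies in `u(K)`
  have key : ∀ k ∈ K, k ∈ V → k ∈ K' := by
    intro k hkK hkV
    set d : H := k - ((K'.orthogonalProjectionOnto k : K') : H) with hd_def
    have hd1 : d ∈ K'ᗮ := Submodule.sub_starProjection_mem_orthogonal (K := K') k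
    have hqK' : ((K'.orthogonalProjectionOnto k : K') : H) ∈ K' := (K'.orthogonalProjectionOnto k).2
    have hdK : d ∈ K := K.sub_mem hkK (hK'K hqK')
    have hdV : d ∈ V := V.sub_mem hkV (hWV (hK'W hqK'))
    have hKsd : ∀ x ∈ Ks, ⟪x, d⟫_ℂ = 0 := by
      intro x hx
      refine Submodule.iSup_induction (motive := fun y => ⟪y, d⟫_ℂ = 0) f hx ?_ (by simp) ?_
      · intro n y hy
        cases n with
        | zero =>
          exact (Submodule.mem_orthogonal' V y).1 hy d hdV
        | succ n =>
          have hyK' : y ∈ K' := by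
            rw [hfs] at hy
            exact Submodule.map_mono (le_trans (le_iSup f n) hKsK) hy
          exact (Submodule.mem_orthogonal K' d).1 hd1 y hyK'
      · intro y z hy hz
        rw [inner_add_left, hy, hz, add_zero]
    have hKd : ∀ x ∈ K, ⟪x, d⟫_ℂ = 0 := by
      intro x hx
      have hcl : IsClosed {y : H | ⟪y, d⟫_ℂ = 0} :=
        isClosed_eq (Continuous.inner continuous_id continuous_const) continuous_const
      have h1 : (Ks : Set H) ⊆ {y : H | ⟪y, d⟫_ℂ = 0} := hKsd
      have h2 : closure (Ks : Set H) ⊆ {y : H | ⟪y, d⟫_ℂ = 0} := closure_minimal h1 hcl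
      have hx' : x ∈ closure (Ks : Set H) := by
        rw [← Submodule.topologicalClosure_coe]; exact hx
      exact h2 hx'
    have hd0 : d = 0 := by
      have := hKd d hdK
      rwa [inner_self_eq_zero] at this
    have : k = ((K'.orthogonalProjectionOnto k : K') : H) := by
      have := sub_eq_zero.1 hd0
      exact this
    rw [this]
    exact hqK'
  -- `φ` is surjective onto `V`
  have hsurj : ∀ v ∈ V, ∃ x, φ x = v := by
    intro v hv
    have h1 : p v ∈ V := by
      have : p v = v - (v - p v) := by abel
      rw [this]
      exact V.sub_mem hv (hKpV (hpperp v))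
    obtain ⟨y, hyK, hyu⟩ := key _ (hpK v) h1
    refine ⟨y + (v - p v), ?_⟩
    have hpx : p (y + (v - p v)) = y := by
      refine Submodule.eq_starProjection_of_mem_orthogonal (K := K) hyK ?_
      have : y + (v - p v) - y = v - p v := by abel
      rw [this]
      exact hpperp v
    rw [hφ, hpx, show (u y : H) = p v from hyu]
    abel
  -- assemble the unitary `H ≃ V`
  set φV : H →ₗ[ℂ] V := φ.codRestrict V hφV with hφV_def
  set Φ : H →ₗᵢ[ℂ] V := ⟨φV, fun x => hφnorm x⟩ with hΦ_def
  have hΦsurj : Function.Surjective Φ := by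
    rintro ⟨v, hv⟩
    obtain ⟨x, hx⟩ := hsurj v hv
    exact ⟨x, Subtype.ext hx⟩
  refine ⟨LinearIsometryEquiv.ofSurjective Φ hΦsurj, fun x => ?_⟩
  show (φ (T x) : H) = T (φ x)
  rw [hφ, hφ, hpT, huT, map_add, map_sub]
end

section
/- Let T1 be a self-adjoint operator on H1, T2 a self-adjoint operator on H2, and U : H1 → H2 a linear isometry with U ∘ T1 ⊆ T2 ∘ U. Then for every x ∈ H1, U((T1 + i)⁻¹ x) = (T2 + i)⁻¹ (U x). -/
open scoped ComplexInnerProductSpace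

/-- An isometry intertwining two self-adjoint operators (in the graph-inclusion sense)
intertwines the resolvents: `U ((T1 + i)⁻¹ x) = (T2 + i)⁻¹ (U x)` for all `x`. -/
theorem isometry_intertwines_resolvents
    {H1 H2 : Type*}
    [NormedAddCommGroup H1] [InnerProductSpace ℂ H1] [CompleteSpace H1]
    [NormedAddCommGroup H2] [InnerProductSpace ℂ H2] [CompleteSpace H2]
    (T1 : H1 →ₗ.[ℂ] H1) (T2 : H2 →ₗ.[ℂ] H2)
    (hT1 : IsSelfAdjoint T1) (hT2 : IsSelfAdjoint T2)
    (U : H1 →ₗᵢ[ℂ] H2)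
    (hUdom : ∀ x : T1.domain, (U x : H2) ∈ T2.domain)
    (hU : ∀ (x : T1.domain) (y : T2.domain), (y : H2) = U x → T2 y = U (T1 x)) :
    ∀ (x : H1) (y1 : T1.domain) (y2 : T2.domain),
      T1 y1 + Complex.I • (y1 : H1) = x →
      T2 y2 + Complex.I • (y2 : H2) = U x →
      U (y1 : H1) = (y2 : H2) := by
  intro x y1 y2 h1 h2
  set w : T2.domain := ⟨U y1, hUdom y1⟩ with hw
  have hTw : T2 w = U (T1 y1) := hU y1 w rfl
  set z : T2.domain := w - y2 with hz
  -- T2 z = - I • z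
  have hTz : T2 z = -(Complex.I • (z : H2)) := by
    have := congrArg U h1
    rw [U.map_add, U.map_smul] at this
    have hT2z : T2 z = T2 w - T2 y2 := by rw [hz, LinearPMap.map_sub]
    rw [hT2z, hTw]
    have : U (T1 y1) = U x - Complex.I • U (y1 : H1) := by
      rw [← this]; abel
    rw [this, ← h2]
    push_cast [hz, hw]
    module
  -- symmetry of T2
  have hdense : Dense (T2.domain : Set H2) := hT2.dense_domain
  have hsymm : ∀ a b : T2.domain, (inner ℂ (T2 a) (b : H2) : ℂ) = inner ℂ (a : H2) (T2 b) := by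
    have key : ∀ (S : H2 →ₗ.[ℂ] H2), S = T2 → S.IsFormalAdjoint T2 →
        ∀ a b : T2.domain, (inner ℂ (T2 a) (b : H2) : ℂ) = inner ℂ (a : H2) (T2 b) := by
      rintro S rfl h a b; exact h a b
    exact key T2.adjoint ((LinearPMap.isSelfAdjoint_def).mp hT2)
      (LinearPMap.adjoint_isFormalAdjoint hdense)
  have hzz : (inner ℂ (T2 z) (z : H2) : ℂ) = inner ℂ (z : H2) (T2 z) := hsymm z z
  rw [hTz] at hzz
  simp only [inner_neg_left, inner_neg_right, inner_smul_left, inner_smul_right,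
    Complex.conj_I] at hzz
  have hz0 : (inner ℂ (z : H2) (z : H2) : ℂ) = 0 := by
    have : (2 * Complex.I) * (inner ℂ (z : H2) (z : H2) : ℂ) = 0 := by linear_combination hzz
    have h2i : (2 * Complex.I) ≠ 0 := by simp [Complex.I_ne_zero]
    exact (mul_eq_zero.mp this).resolve_left h2i
  have : (z : H2) = 0 := inner_self_eq_zero.mp hz0
  have hsub : (w : H2) - (y2 : H2) = 0 := by
    rw [hz] at this; exact_mod_cast this
  exact sub_eq_zero.mp hsub
end
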